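/- There exists a universal constant C' > 0 with the following property. Let f^{(1)}, …, f^{(m)} ∈ ℝ^n be the frequency vectors of an insertion-only stream, let 0 < γ ≤ 1, and let T ∈ ℝ^{k×n} be a (1±γ)-embedding of {f^{(1)}, …, f^{(m)}}. Let Z̄_1, …, Z̄_k be i.i.d. Rademacher random variables and define Y_t = ⟨Z̄, T f^{(t)}⟩ for t ∈ [m]. Then E[ sup_{t∈[m]} |Y_t| ] ≤ C' (1+γ) ‖f^{(m)}‖₂. -/

import Mathlib

open MeasureTheory ProbabilityTheory
open scoped ENNReal

/-- The Euclidean (ℓ₂) norm of a vector in ℝ^k. -/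
noncomputable def l2norm {k : ℕ} (x : Fin k → ℝ) : ℝ := Real.sqrt (∑ i, (x i) ^ 2)

/-- The frequency vector at time `t` of the insertion-only stream `p` over universe `[n]`. -/
noncomputable def freq {n m : ℕ} (p : Fin m → Fin n) (t : ℕ) : Fin n → ℝ :=
  fun j => ((Finset.univ.filter fun t' : Fin m => (t' : ℕ) < t ∧ p t' = j).card : ℝ)

/-- The law of a Rademacher random variable: uniform on `{-1, +1}`. -/
noncomputable def radMeasure : Measure ℝ :=
  (2⁻¹ : ℝ≥0∞) • Measure.dirac (1 : ℝ) + (2⁻¹ : ℝ≥0∞) • Measure.dirac (-1 : ℝ)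

/-- A matrix `T ∈ ℝ^{k×n}` is a `(1±γ)`-embedding of a set `V ⊆ ℝ^n` if
`(1−γ)‖x−y‖₂ ≤ ‖Tx−Ty‖₂ ≤ (1+γ)‖x−y‖₂` for all `x, y ∈ V ∪ {0}`. -/
def IsJLEmbedding {k n : ℕ} (γ : ℝ) (T : Matrix (Fin k) (Fin n) ℝ)
    (V : Set (Fin n → ℝ)) : Prop :=
  ∀ x ∈ V ∪ {0}, ∀ y ∈ V ∪ {0},
    (1 - γ) * l2norm (x - y) ≤ l2norm (T.mulVec x - T.mulVec y) ∧
    l2norm (T.mulVec x - T.mulVec y) ≤ (1 + γ) * l2norm (x - y)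

/-!
Each `Y_t` is a Rademacher sum `∑ Z̄ᵢ vᵢ`, hence sub-Gaussian with variance proxy `‖v‖²` (as
`cosh x ≤ exp (x² / 2)`), and so are the increments `Y_s - Y_t`. For an insertion-only stream the
frequency vectors grow coordinatewise, so `‖f⁽ˢ⁾ - f⁽ᵗ⁾‖² ≤ |‖f⁽ˢ⁾‖² - ‖f⁽ᵗ⁾‖²|`; through the
embedding this gives increments with proxy `D² |b_s - b_t|`, where `D = (1+γ)‖f⁽ᵐ⁾‖` and
`b_t = ‖f⁽ᵗ⁾‖² / ‖f⁽ᵐ⁾‖² ∈ [0, 1]`. The index set is thus one-dimensional, and chaining along the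
partitions of `[0, 1]` into intervals of length `4⁻ʲ` bounds `E sup |Y_t|`: the `j`-th links are
at most `4ʲ⁺¹ + 1` sub-Gaussian variables with proxy `D² 4⁻ʲ`, so by the maximal inequality
`E max |Xᵢ| ≤ (log (2N) + c l² / 2) / l` they cost `(j + 3) D 2⁻ʲ`, which sums to at most `11 D`.
-/

open Finset Real NNReal Matrix

lemma ProbabilityTheory.HasSubgaussianMGF.mono {Ω : Type*} [MeasurableSpace Ω] {μ : Measure Ω}
    {X : Ω → ℝ} {c c' : ℝ≥0} (h : HasSubgaussianMGF X c μ) (hc : c ≤ c') :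
    HasSubgaussianMGF X c' μ where
  integrable_exp_mul := h.integrable_exp_mul
  mgf_le t := (h.mgf_le t).trans (exp_le_exp.2 (by gcongr))

lemma ProbabilityTheory.HasSubgaussianMGF.integral_exp_add_exp_neg_le {Ω : Type*}
    [MeasurableSpace Ω] {μ : Measure Ω} {X : Ω → ℝ} {c : ℝ≥0} (h : HasSubgaussianMGF X c μ)
    (l : ℝ) : ∫ ω, (exp (l * X ω) + exp (-l * X ω)) ∂μ ≤ 2 * exp (c * l ^ 2 / 2) := by
  rw [integral_add (h.integrable_exp_mul l) (h.integrable_exp_mul (-l))]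
  have h₁ := h.mgf_le l
  have h₂ := h.mgf_le (-l)
  rw [neg_sq] at h₂
  simp only [mgf] at h₁ h₂
  linarith

lemma integrable_radMeasure (f : ℝ → ℝ) : Integrable f radMeasure :=
  ((integrable_dirac (by simp)).smul_measure (by simp)).add_measure
    ((integrable_dirac (by simp)).smul_measure (by simp))

lemma integral_radMeasure (f : ℝ → ℝ) :
    ∫ x, f x ∂radMeasure = (f 1 + f (-1)) / 2 := by
  rw [radMeasure, integral_add_measure ((integrable_dirac (by simp)).smul_measure (by simp))
    ((integrable_dirac (by simp)).smul_measure (by simp)), integral_smul_measure,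
    integral_smul_measure, integral_dirac, integral_dirac]
  simp only [ENNReal.toReal_inv, ENNReal.toReal_ofNat, smul_eq_mul]
  ring

lemma hasSubgaussianMGF_mul_const_radMeasure (a : ℝ) :
    HasSubgaussianMGF (fun x => x * a) (‖a‖₊ ^ 2) radMeasure where
  integrable_exp_mul _ := integrable_radMeasure _
  mgf_le t := by
    rw [mgf, integral_radMeasure]
    convert cosh_le_exp_half_sq (t * a) using 1
    · rw [cosh_eq]
      ring_nf
    · push_cast
      rw [Real.norm_eq_abs, sq_abs]
      ring_nf

lemma hasSubgaussianMGF_sum_mul_rademacher {κ Ω : Type*} [Fintype κ] [MeasurableSpace Ω]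
    {μ : Measure Ω} {Z : κ → Ω → ℝ} (hZ : ∀ i, Measurable (Z i)) (hindep : iIndepFun Z μ)
    (hmap : ∀ i, μ.map (Z i) = radMeasure) (v : κ → ℝ) {c : ℝ≥0} (hc : ∑ i, v i ^ 2 ≤ c) :
    HasSubgaussianMGF (fun ω => ∑ i, Z i ω * v i) c μ := by
  have hterm (i : κ) : HasSubgaussianMGF (fun ω => Z i ω * v i) (‖v i‖₊ ^ 2) μ :=
    (hmap i ▸ hasSubgaussianMGF_mul_const_radMeasure (v i)).of_map (hZ i).aemeasurable
  refine (HasSubgaussianMGF.sum_of_iIndepFun (s := univ)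
    (hindep.comp (fun i x => x * v i) fun i => measurable_mul_const (v i))
    fun i _ => hterm i).mono ?_
  rw [← NNReal.coe_le_coe]
  push_cast
  simpa only [coe_nnnorm, Real.norm_eq_abs, sq_abs] using hc

section MaximalInequality

variable {ι Ω : Type*} [MeasurableSpace Ω] {μ : Measure Ω} {X : ι → Ω → ℝ} {s : Finset ι}

lemma integrable_finset_sup'_abs (hs : s.Nonempty) (hX : ∀ i ∈ s, Integrable (X i) μ) :
    Integrable (fun ω => s.sup' hs fun i => |X i ω|) μ := by
  have := sup'_induction hs (fun i ω => |X i ω|) (p := fun f => Integrable f μ)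
    (fun _ hf _ hg => hf.sup hg) fun i hi => (hX i hi).abs
  convert this using 1
  ext ω
  rw [Finset.sup'_apply]

lemma exp_mul_abs_le_exp_add_exp_neg (l x : ℝ) :
    exp (l * |x|) ≤ exp (l * x) + exp (-l * x) := by
  rcases abs_cases x with ⟨hx, -⟩ | ⟨hx, -⟩ <;> rw [hx]
  · exact le_add_of_nonneg_right (exp_pos _).le
  · rw [mul_neg, ← neg_mul]
    exact le_add_of_nonneg_left (exp_pos _).le

lemma exp_mul_sup'_abs_le_sum (hs : s.Nonempty) (x : ι → ℝ) (l : ℝ) :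
    exp (l * s.sup' hs fun i => |x i|) ≤ ∑ i ∈ s, (exp (l * x i) + exp (-l * x i)) := by
  obtain ⟨i, hi, hmax⟩ := exists_mem_eq_sup' hs fun i => |x i|
  rw [hmax]
  exact (exp_mul_abs_le_exp_add_exp_neg l (x i)).trans
    (single_le_sum (f := fun j => exp (l * x j) + exp (-l * x j)) (fun _ _ => by positivity) hi)

theorem integral_finset_sup'_abs_le [IsProbabilityMeasure μ] (hs : s.Nonempty) {c : ℝ≥0}
    (hX : ∀ i ∈ s, HasSubgaussianMGF (X i) c μ) {l : ℝ} (hl : 0 < l) :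
    ∫ ω, s.sup' hs (fun i => |X i ω|) ∂μ ≤ (log (2 * #s) + c * l ^ 2 / 2) / l := by
  set M := fun ω => s.sup' hs fun i => |X i ω|
  set G := fun ω => ∑ i ∈ s, (exp (l * X i ω) + exp (-l * X i ω))
  have hint : ∀ i ∈ s, Integrable (fun ω => exp (l * X i ω) + exp (-l * X i ω)) μ :=
    fun i hi => ((hX i hi).integrable_exp_mul l).add ((hX i hi).integrable_exp_mul (-l))
  have hG : Integrable G μ := integrable_finsetSum _ hint
  have hM : Integrable M μ := integrable_finset_sup'_abs hs fun i hi => (hX i hi).integrable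
  have hexp : Integrable (fun ω => exp (l * M ω)) μ :=
    hG.mono' (hM.aemeasurable.const_mul l).exp.aestronglyMeasurable <| ae_of_all _ fun ω => by
      rw [norm_of_nonneg (exp_pos _).le]
      exact exp_mul_sup'_abs_le_sum hs _ l
  have hEG : ∫ ω, G ω ∂μ ≤ 2 * #s * exp (c * l ^ 2 / 2) := by
    simp only [G]
    rw [integral_finsetSum _ hint]
    refine (sum_le_sum fun i hi => (hX i hi).integral_exp_add_exp_neg_le l).trans_eq ?_
    rw [sum_const, nsmul_eq_mul]
    ring
  rw [le_div_iff₀ hl, mul_comm, ← integral_const_mul, ← exp_le_exp,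
    exp_add, exp_log (by have := hs.card_pos; positivity)]
  calc exp (∫ ω, l * M ω ∂μ) ≤ ∫ ω, exp (l * M ω) ∂μ :=
        convexOn_exp.map_integral_le continuous_exp.continuousOn isClosed_univ
          (ae_of_all _ fun _ => Set.mem_univ _) (hM.const_mul l) hexp
    _ ≤ ∫ ω, G ω ∂μ := integral_mono hexp hG fun ω => exp_mul_sup'_abs_le_sum hs _ l
    _ ≤ 2 * #s * exp (c * l ^ 2 / 2) := hEG

lemma log_two_mul_le_of_le_four_pow {x : ℝ} {j : ℕ} (hx : 0 < x) (h : x ≤ 4 ^ (j + 1) + 1) :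
    log (2 * x) ≤ 2 * (j + 2) := by
  have h4 : 2 * x ≤ 2 ^ (2 * (j + 2)) := by
    have : (1 : ℝ) ≤ 4 ^ (j + 1) := one_le_pow₀ (by norm_num)
    rw [pow_mul, show j + 2 = j + 1 + 1 by ring, pow_succ _ (j + 1)]
    norm_num
    linarith
  calc log (2 * x) ≤ log (2 ^ (2 * (j + 2))) := log_le_log (by positivity) h4
    _ = 2 * (j + 2) * log 2 := by rw [log_pow]; push_cast; ring
    _ ≤ 2 * (j + 2) := by nlinarith [log_two_lt_d9]

theorem integral_finset_sup'_abs_le_of_card_le [IsProbabilityMeasure μ] (hs : s.Nonempty)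
    {D : ℝ≥0} (hD : 0 < D) (j : ℕ) (hcard : #s ≤ 4 ^ (j + 1) + 1)
    (hX : ∀ i ∈ s, HasSubgaussianMGF (X i) (D ^ 2 / 4 ^ j) μ) :
    ∫ ω, s.sup' hs (fun i => |X i ω|) ∂μ ≤ (j + 3) * D / 2 ^ j := by
  have hD' : (0 : ℝ) < D := hD
  -- this `l` makes the variance term `c l² / 2` equal to `2`
  refine (integral_finset_sup'_abs_le hs hX (l := 2 * 2 ^ j / D) (by positivity)).trans ?_
  have hlog := log_two_mul_le_of_le_four_pow (Nat.cast_pos.2 hs.card_pos)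
    (show (#s : ℝ) ≤ 4 ^ (j + 1) + 1 by exact_mod_cast hcard)
  have h4 : (4 : ℝ) ^ j = (2 ^ j) ^ 2 := by rw [← pow_mul, mul_comm, pow_mul]; norm_num
  push_cast
  rw [h4]
  field_simp
  nlinarith

end MaximalInequality

section Chaining

variable {ι : Type*}

lemma abs_le_sum_abs_sub_of_chain (x : ι → ℝ) (p : ℕ → ι → ι) {N : ℕ} (hpN : p N = id)
    (t : ι) : |x t| ≤ |x (p 0 t)| + ∑ j ∈ range N, |x (p (j + 1) t) - x (p j t)| := by
  have htel := sum_range_sub (fun j => x (p j t)) N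
  rw [hpN, id] at htel
  calc |x t| = |x (p 0 t) + ∑ j ∈ range N, (x (p (j + 1) t) - x (p j t))| := by
        rw [htel, add_sub_cancel]
    _ ≤ _ := (abs_add_le _ _).trans (add_le_add le_rfl (abs_sum_le_sum_abs _ _))

theorem integral_iSup_abs_le_of_chain [Fintype ι] [DecidableEq ι] [Nonempty ι] {Ω : Type*}
    [MeasurableSpace Ω] {μ : Measure Ω} {X : ι → Ω → ℝ} (hX : ∀ t, Integrable (X t) μ)
    (p : ℕ → ι → ι) {N : ℕ} (hpN : p N = id) (hp : ∀ j < N, ∀ t, p j (p (j + 1) t) = p j t) :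
    ∫ ω, ⨆ t, |X t ω| ∂μ ≤
      ∫ ω, (univ.image (p 0)).sup' (univ_nonempty.image _) (fun u => |X u ω|) ∂μ +
      ∑ j ∈ range N, ∫ ω, (univ.image (p (j + 1))).sup' (univ_nonempty.image _)
        (fun u => |X u ω - X (p j u) ω|) ∂μ := by
  have hint₀ := integrable_finset_sup'_abs (univ_nonempty.image (p 0)) fun u _ => hX u
  have hint (j : ℕ) := integrable_finset_sup'_abs (univ_nonempty.image (p (j + 1)))
    (X := fun u ω => X u ω - X (p j u) ω) fun u _ => (hX u).sub (hX _)
  have hsum := integrable_finsetSum (range N) fun j _ => hint j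
  rw [← integral_finsetSum _ fun j _ => hint j, ← integral_add hint₀ hsum]
  refine integral_mono_of_nonneg (ae_of_all _ fun ω => ?_) (hint₀.add hsum)
    (ae_of_all _ fun ω => ?_)
  · exact (abs_nonneg _).trans
      (le_ciSup (Set.finite_range fun t => |X t ω|).bddAbove (Classical.arbitrary ι))
  · refine ciSup_le fun t => (abs_le_sum_abs_sub_of_chain (X · ω) p hpN t).trans
      (add_le_add ?_ (sum_le_sum fun j hj => ?_))
    · exact le_sup' (fun u => |X u ω|) (mem_image_of_mem _ (mem_univ t))
    · rw [← hp j (mem_range.1 hj) t]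
      exact le_sup' (fun u => |X u ω - X (p j u) ω|) (mem_image_of_mem _ (mem_univ t))

end Chaining

section LevelClasses

noncomputable def levelClass (x : ℝ) (j : ℕ) : ℕ := ⌊x * 4 ^ j⌋₊

lemma levelClass_le {x : ℝ} (hx : x ≤ 1) (j : ℕ) : levelClass x j ≤ 4 ^ j :=
  Nat.floor_le_of_le (by push_cast; nlinarith [pow_pos (by norm_num : (0 : ℝ) < 4) j])

lemma levelClass_succ_div_four (x : ℝ) (j : ℕ) : levelClass x (j + 1) / 4 = levelClass x j := by
  rw [levelClass, levelClass, ← Nat.floor_div_natCast]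
  congr 1
  push_cast
  ring

lemma abs_sub_le_of_levelClass_eq {x y : ℝ} (hx : 0 ≤ x) (hy : 0 ≤ y) {j : ℕ}
    (h : levelClass x j = levelClass y j) : |x - y| ≤ 1 / 4 ^ j := by
  have h4 : (0 : ℝ) < 4 ^ j := by positivity
  have hx₁ := Nat.floor_le (mul_nonneg hx h4.le)
  have hx₂ := Nat.lt_floor_add_one (x * 4 ^ j)
  have hy₁ := Nat.floor_le (mul_nonneg hy h4.le)
  have hy₂ := Nat.lt_floor_add_one (y * 4 ^ j)
  simp only [levelClass] at h
  rw [h] at hx₁ hx₂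
  rw [abs_sub_le_iff, le_div_iff₀ h4, le_div_iff₀ h4, sub_mul, sub_mul]
  constructor <;> linarith

variable {ι : Type*} [Nonempty ι] (b : ι → ℝ) (N : ℕ)

/-- The identity from level `N` on, so that the chain `j ↦ levelProj b N j t` ends at `t`. -/
noncomputable def levelProj (j : ℕ) : ι → ι :=
  if j < N then Function.invFun (fun t => levelClass (b t) j) ∘ fun t => levelClass (b t) j
  else id

lemma levelProj_self : levelProj b N N = id := by simp [levelProj]

lemma levelClass_levelProj (j : ℕ) (t : ι) :
    levelClass (b (levelProj b N j t)) j = levelClass (b t) j := by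
  unfold levelProj
  split_ifs
  · exact Function.invFun_eq (f := fun t => levelClass (b t) j) ⟨t, rfl⟩
  · rfl

lemma levelProj_congr {j : ℕ} (hj : j < N) {s t : ι}
    (h : levelClass (b s) j = levelClass (b t) j) : levelProj b N j s = levelProj b N j t := by
  simp only [levelProj, hj, if_true, Function.comp_apply, h]

lemma levelProj_levelProj_succ {j : ℕ} (hj : j < N) (t : ι) :
    levelProj b N j (levelProj b N (j + 1) t) = levelProj b N j t := by
  refine levelProj_congr b N hj ?_
  rw [← levelClass_succ_div_four, levelClass_levelProj, levelClass_succ_div_four]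

variable {b} in
lemma card_image_levelProj_le [Fintype ι] [DecidableEq ι] (hb : ∀ t, b t ≤ 1)
    (hN : Fintype.card ι ≤ 4 ^ N) {j : ℕ} (hj : j ≤ N) :
    #(univ.image (levelProj b N j)) ≤ 4 ^ j + 1 := by
  rcases hj.lt_or_eq with hj | rfl
  · simp only [levelProj, hj, if_true, ← image_image]
    calc #((univ.image fun t => levelClass (b t) j).image _)
        ≤ #(univ.image fun t => levelClass (b t) j) := card_image_le
      _ ≤ #(range (4 ^ j + 1)) := card_le_card (image_subset_iff.2 fun t _ =>
          mem_range.2 (Nat.lt_succ_of_le (levelClass_le (hb t) j)))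
      _ = 4 ^ j + 1 := card_range _
  · simp only [levelProj_self, image_id, card_univ]
    omega

end LevelClasses

lemma sum_range_add_three_div_two_pow_le (N : ℕ) :
    ∑ j ∈ range N, ((j : ℝ) + 3) / 2 ^ j ≤ 8 := by
  have hclosed : ∑ j ∈ range N, ((j : ℝ) + 3) / 2 ^ j = 8 - (2 * N + 8) / 2 ^ N := by
    induction N with
    | zero => norm_num
    | succ n ih =>
      rw [sum_range_succ, ih]
      push_cast
      field_simp
      ring
  rw [hclosed]
  linarith [show (0 : ℝ) ≤ (2 * N + 8) / 2 ^ N by positivity]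

theorem integral_iSup_abs_le_of_hasSubgaussianMGF_sub {ι Ω : Type*} [Fintype ι] [Nonempty ι]
    [MeasurableSpace Ω] {μ : Measure Ω} [IsProbabilityMeasure μ] {X : ι → Ω → ℝ} {b : ι → ℝ}
    (hb₀ : ∀ t, 0 ≤ b t) (hb₁ : ∀ t, b t ≤ 1) {D : ℝ≥0} (hD : 0 < D)
    (hX : ∀ t, HasSubgaussianMGF (X t) (D ^ 2) μ)
    (hXsub : ∀ s t, HasSubgaussianMGF (fun ω => X s ω - X t ω) (D ^ 2 * ‖b s - b t‖₊) μ) :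
    ∫ ω, ⨆ t, |X t ω| ∂μ ≤ 11 * D := by
  classical
  set N := Fintype.card ι
  set p := levelProj b N
  have hN : Fintype.card ι ≤ 4 ^ N := (Nat.lt_pow_self (by norm_num)).le
  have hlevel₀ := integral_finset_sup'_abs_le_of_card_le (univ_nonempty.image (p 0)) hD 0
    ((card_image_levelProj_le N hb₁ hN (Nat.zero_le _)).trans (by norm_num))
    fun u _ => by simpa using hX u
  have hlevel (j : ℕ) (hj : j < N) := integral_finset_sup'_abs_le_of_card_le
    (univ_nonempty.image (p (j + 1))) hD j (card_image_levelProj_le N hb₁ hN hj.succ_le)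
    (X := fun u ω => X u ω - X (p j u) ω) fun u _ => (hXsub u (p j u)).mono <| by
      rw [div_eq_mul_one_div (D ^ 2)]
      gcongr
      rw [← NNReal.coe_le_coe, coe_nnnorm, Real.norm_eq_abs]
      push_cast
      exact abs_sub_le_of_levelClass_eq (hb₀ _) (hb₀ _) (levelClass_levelProj b N j u).symm
  calc ∫ ω, ⨆ t, |X t ω| ∂μ
      ≤ 3 * (D : ℝ) + ∑ j ∈ range N, ((j : ℝ) + 3) * D / 2 ^ j :=
        (integral_iSup_abs_le_of_chain (fun t => (hX t).integrable) p (levelProj_self b N)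
          fun j hj t => levelProj_levelProj_succ b N hj t).trans <|
          add_le_add (by simpa using hlevel₀) (sum_le_sum fun j hj => hlevel j (mem_range.1 hj))
    _ = 3 * (D : ℝ) + D * ∑ j ∈ range N, ((j : ℝ) + 3) / 2 ^ j := by
        rw [mul_sum]
        congr 1
        exact sum_congr rfl fun j _ => by ring
    _ ≤ 3 * D + D * 8 := by gcongr; exact sum_range_add_three_div_two_pow_le N
    _ = 11 * D := by ring

section Stream

variable {n m : ℕ} (p : Fin m → Fin n)

lemma freq_nonneg (t : ℕ) (j : Fin n) : 0 ≤ freq p t j := Nat.cast_nonneg _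

lemma freq_mono {s t : ℕ} (h : s ≤ t) (j : Fin n) : freq p s j ≤ freq p t j := by
  unfold freq
  gcongr

lemma sum_sq_freq_mono {s t : ℕ} (h : s ≤ t) : ∑ j, freq p s j ^ 2 ≤ ∑ j, freq p t j ^ 2 :=
  sum_le_sum fun j _ => pow_le_pow_left₀ (freq_nonneg p s j) (freq_mono p h j) 2

lemma sum_sq_freq_pos (hm : 0 < m) : 0 < ∑ j, freq p m j ^ 2 := by
  refine sum_pos' (fun j _ => sq_nonneg _) ⟨p ⟨0, hm⟩, mem_univ _, pow_pos ?_ 2⟩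
  exact Nat.cast_pos.2 (card_pos.2 ⟨⟨0, hm⟩, by simp⟩)

lemma sum_sub_sq_le_sub_sum_sq {κ : Type*} [Fintype κ] {x y : κ → ℝ} (hy : ∀ j, 0 ≤ y j)
    (hyx : ∀ j, y j ≤ x j) : ∑ j, (x j - y j) ^ 2 ≤ ∑ j, x j ^ 2 - ∑ j, y j ^ 2 := by
  rw [← sum_sub_distrib]
  exact sum_le_sum fun j _ => by nlinarith [hy j, hyx j]

lemma sum_sq_freq_sub_le (s t : ℕ) :
    ∑ j, (freq p s j - freq p t j) ^ 2 ≤ |∑ j, freq p s j ^ 2 - ∑ j, freq p t j ^ 2| := by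
  rcases le_total s t with h | h
  · calc ∑ j, (freq p s j - freq p t j) ^ 2 = ∑ j, (freq p t j - freq p s j) ^ 2 := by
          simp only [sub_sq_comm]
      _ ≤ ∑ j, freq p t j ^ 2 - ∑ j, freq p s j ^ 2 :=
          sum_sub_sq_le_sub_sum_sq (freq_nonneg p s) (freq_mono p h)
      _ ≤ _ := by rw [abs_sub_comm]; exact le_abs_self _
  · exact (sum_sub_sq_le_sub_sum_sq (freq_nonneg p t) (freq_mono p h)).trans (le_abs_self _)

end Stream

lemma l2norm_sq {k : ℕ} (x : Fin k → ℝ) : l2norm x ^ 2 = ∑ i, x i ^ 2 :=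
  Real.sq_sqrt (sum_nonneg fun _ _ => sq_nonneg _)

lemma IsJLEmbedding.sum_sq_mulVec_sub_le {k n : ℕ} {γ : ℝ} {T : Matrix (Fin k) (Fin n) ℝ}
    {V : Set (Fin n → ℝ)} (hT : IsJLEmbedding γ T V) {x y : Fin n → ℝ} (hx : x ∈ V ∪ {0})
    (hy : y ∈ V ∪ {0}) :
    ∑ i, (T *ᵥ x - T *ᵥ y) i ^ 2 ≤ (1 + γ) ^ 2 * ∑ j, (x - y) j ^ 2 := by
  rw [← l2norm_sq, ← l2norm_sq, ← mul_pow]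
  exact pow_le_pow_left₀ (Real.sqrt_nonneg _) (hT x hx y hy).2 2

section JLStream

variable {n m k : ℕ} {p : Fin m → Fin n} {γ : ℝ} {T : Matrix (Fin k) (Fin n) ℝ}

lemma IsJLEmbedding.sum_sq_mulVec_freq_le
    (hT : IsJLEmbedding γ T {x | ∃ t : Fin m, x = freq p ((t : ℕ) + 1)}) (t : Fin m) :
    ∑ i, (T *ᵥ freq p (t + 1)) i ^ 2 ≤ (1 + γ) ^ 2 * ∑ j, freq p m j ^ 2 := by
  simpa using (hT.sum_sq_mulVec_sub_le (Or.inl ⟨t, rfl⟩) (Or.inr rfl)).trans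
    (mul_le_mul_of_nonneg_left (by simpa using sum_sq_freq_mono p t.isLt) (sq_nonneg _))

lemma IsJLEmbedding.sum_sq_mulVec_freq_sub_le
    (hT : IsJLEmbedding γ T {x | ∃ t : Fin m, x = freq p ((t : ℕ) + 1)}) (s t : Fin m) :
    ∑ i, (T *ᵥ freq p (s + 1) - T *ᵥ freq p (t + 1)) i ^ 2 ≤
      (1 + γ) ^ 2 * |∑ j, freq p (s + 1) j ^ 2 - ∑ j, freq p (t + 1) j ^ 2| :=
  (hT.sum_sq_mulVec_sub_le (Or.inl ⟨s, rfl⟩) (Or.inl ⟨t, rfl⟩)).trans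
    (by gcongr; exact sum_sq_freq_sub_le p _ _)

end JLStream

/-- **Chaining Inequality for the JL-transformed stream (Rademacher case).** -/
theorem chaining_inequality_JL_bernoulli :
    ∃ C' : ℝ, 0 < C' ∧
      ∀ (n m k : ℕ), 0 < m →
      ∀ (p : Fin m → Fin n) (γ : ℝ), 0 < γ → γ ≤ 1 →
      ∀ (T : Matrix (Fin k) (Fin n) ℝ),
        IsJLEmbedding γ T {x | ∃ t : Fin m, x = freq p ((t : ℕ) + 1)} →
      ∀ (Ω : Type) [MeasurableSpace Ω] (μ : Measure Ω) [IsProbabilityMeasure μ]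
        (Z : Fin k → Ω → ℝ),
        (∀ i, Measurable (Z i)) →
        iIndepFun Z μ →
        (∀ i, Measure.map (Z i) μ = radMeasure) →
        (∫ ω, (⨆ t : Fin m, |∑ i, Z i ω * T.mulVec (freq p ((t : ℕ) + 1)) i|) ∂μ)
          ≤ C' * (1 + γ) * l2norm (freq p m) := by
  refine ⟨11, by norm_num, fun n m k hm p γ hγ _ T hT Ω _ μ _ Z hZ hindep hmap => ?_⟩
  have : Nonempty (Fin m) := ⟨⟨0, hm⟩⟩
  set F := ∑ j, freq p m j ^ 2
  have hF : 0 < F := sum_sq_freq_pos p hm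
  let D : ℝ≥0 := ⟨(1 + γ) * l2norm (freq p m), mul_nonneg (by linarith) (Real.sqrt_nonneg _)⟩
  have hD : 0 < D := NNReal.coe_pos.1 (mul_pos (by linarith) (Real.sqrt_pos.2 hF))
  have hD2 : (D : ℝ) ^ 2 = (1 + γ) ^ 2 * F := by
    rw [show (D : ℝ) = (1 + γ) * l2norm (freq p m) from rfl, mul_pow, l2norm_sq]
  set X : Fin m → Ω → ℝ := fun t ω => ∑ i, Z i ω * (T *ᵥ freq p (t + 1)) i
  have hX (t : Fin m) : HasSubgaussianMGF (X t) (D ^ 2) μ :=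
    hasSubgaussianMGF_sum_mul_rademacher hZ hindep hmap _ <| by
      simpa only [NNReal.coe_pow, hD2] using hT.sum_sq_mulVec_freq_le t
  have hXsub (s t : Fin m) : HasSubgaussianMGF (fun ω => X s ω - X t ω)
      (D ^ 2 * ‖(∑ j, freq p (s + 1) j ^ 2) / F - (∑ j, freq p (t + 1) j ^ 2) / F‖₊) μ := by
    refine (hasSubgaussianMGF_sum_mul_rademacher hZ hindep hmap
      (T *ᵥ freq p (s + 1) - T *ᵥ freq p (t + 1)) ?_).congr
      (ae_of_all _ fun ω => by simp [X, mul_sub, sum_sub_distrib])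
    push_cast
    rw [Real.norm_eq_abs, hD2, div_sub_div_same, abs_div, abs_of_pos hF, mul_assoc,
      mul_div_cancel₀ _ hF.ne']
    exact hT.sum_sq_mulVec_freq_sub_le s t
  exact (integral_iSup_abs_le_of_hasSubgaussianMGF_sub (fun t => by positivity)
    (fun t => div_le_one_of_le₀ (sum_sq_freq_mono p t.isLt) hF.le) hD hX hXsub).trans_eq
    (mul_assoc _ _ _).symm
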